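/- Theorem (population Fréchet mean of inhomogeneous Erdős–Rényi graphs): Let Pr be the inhomogeneous Erdős–Rényi measure on S with edge-probability matrix P. Then the adjacency matrix M defined by M_ij = 1 if p_ij > 1/2 and M_ij = 0 otherwise is a Fréchet mean, i.e., for every B ∈ S, Σ_{A∈S} d_H(A,M)^2 Pr(A) ≤ Σ_{A∈S} d_H(A,B)^2 Pr(A). -/

import Mathlib

open Finset
open scoped Classical

/-- The set of pairs (i,j) with i < j. -/
def pairs (n : ℕ) : Finset (Fin n × Fin n) :=
  Finset.univ.filter (fun q => q.1 < q.2)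

/-- The set `S` of adjacency matrices: symmetric Bool matrices with zero (false) diagonal. -/
noncomputable def adjS (n : ℕ) : Finset (Matrix (Fin n) (Fin n) Bool) :=
  Finset.univ.filter (fun A => (∀ i j, A i j = A j i) ∧ ∀ i, A i i = false)

/-- The real-valued 0/1 entry of an adjacency matrix. -/
noncomputable def val {n : ℕ} (A : Matrix (Fin n) (Fin n) Bool) (i j : Fin n) : ℝ :=
  if A i j then 1 else 0

/-- The Hamming distance between two graphs. -/
noncomputable def dH {n : ℕ} (A B : Matrix (Fin n) (Fin n) Bool) : ℝ :=
  ∑ q ∈ pairs n, |val A q.1 q.2 - val B q.1 q.2|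

/-- The inhomogeneous Erdős–Rényi probability of an adjacency matrix:
`∏_{i<j} p_ij^{a_ij} (1-p_ij)^{1-a_ij}`. -/
noncomputable def erPr {n : ℕ} (p : Fin n → Fin n → ℝ) (A : Matrix (Fin n) (Fin n) Bool) : ℝ :=
  ∏ q ∈ pairs n, if A q.1 q.2 then p q.1 q.2 else 1 - p q.1 q.2

/-- The edge set of a graph: pairs (i,j), i<j, with b_ij = 1. -/
def edges {n : ℕ} (B : Matrix (Fin n) (Fin n) Bool) : Finset (Fin n × Fin n) :=
  (pairs n).filter (fun q => B q.1 q.2 = true)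

/-
Under the Erdős–Rényi measure the entries `a_e`, `e = (i, j)` with `i < j`, are independent Bernoulli
variables, so `d_H(A, B)` is a sum of independent indicators of `a_e ≠ b_e`, with means `q_e(B)`
equal to `1 - p_e` or `p_e` according as `b_e = 1` or `0`. Hence
`E d_H(A, B)² = (∑ q_e(B))² + ∑ q_e(B)(1 - q_e(B))`. The variance term is `∑ p_e(1 - p_e)` whatever
`B` is, and `q_e(M) = min (p_e, 1 - p_e) ≤ q_e(B)` for each `e`, so `M` minimises the first term.
-/

lemma mem_pairs_iff {n : ℕ} {q : Fin n × Fin n} : q ∈ pairs n ↔ q.1 < q.2 := by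
  simp [pairs]

noncomputable def adjOfPairs {n : ℕ} (g : pairs n → Bool) : Matrix (Fin n) (Fin n) Bool :=
  fun i j => if h : (i, j) ∈ pairs n then g ⟨(i, j), h⟩
    else if h' : (j, i) ∈ pairs n then g ⟨(j, i), h'⟩ else false

lemma adjOfPairs_mem_adjS {n : ℕ} (g : pairs n → Bool) : adjOfPairs g ∈ adjS n := by
  simp only [adjS, mem_filter, mem_univ, true_and]
  refine ⟨fun i j => ?_, fun i => by simp [adjOfPairs, mem_pairs_iff]⟩
  rcases lt_trichotomy i j with h | rfl | h
  · simp [adjOfPairs, mem_pairs_iff, h, h.le]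
  · rfl
  · simp [adjOfPairs, mem_pairs_iff, h, h.le]

lemma adjOfPairs_apply {n : ℕ} {A : Matrix (Fin n) (Fin n) Bool} (hA : A ∈ adjS n) :
    adjOfPairs (fun q : pairs n => A q.1.1 q.1.2) = A := by
  simp only [adjS, mem_filter, mem_univ, true_and] at hA
  funext i j
  rcases lt_trichotomy i j with h | rfl | h
  · simp [adjOfPairs, mem_pairs_iff, h]
  · simp [adjOfPairs, mem_pairs_iff, hA.2 i]
  · simp [adjOfPairs, mem_pairs_iff, h, hA.1 i j]

/-- A graph is determined freely by its entries above the diagonal. -/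
lemma sum_adjS_prod {n : ℕ} (f : Fin n × Fin n → Bool → ℝ) :
    ∑ A ∈ adjS n, ∏ q ∈ pairs n, f q (A q.1 q.2) = ∏ q ∈ pairs n, ∑ b : Bool, f q b := by
  rw [← prod_coe_sort (pairs n), Fintype.prod_sum]
  refine sum_bij' (fun A _ q => A q.1.1 q.1.2) (fun g _ => adjOfPairs g)
    (fun _ _ => mem_univ _) (fun g _ => adjOfPairs_mem_adjS g)
    (fun A hA => adjOfPairs_apply hA) (fun g _ => ?_) (fun A _ => by rw [← prod_coe_sort])
  funext ⟨⟨i, j⟩, hq⟩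
  simp [adjOfPairs, hq]

def bernoulliMean (t : ℝ) (φ : Bool → ℝ) : ℝ :=
  φ true * t + φ false * (1 - t)

lemma sum_adjS_prod_mul_erPr {n : ℕ} (p : Fin n → Fin n → ℝ) (φ : Fin n × Fin n → Bool → ℝ) :
    ∑ A ∈ adjS n, (∏ q ∈ pairs n, φ q (A q.1 q.2)) * erPr p A
      = ∏ q ∈ pairs n, bernoulliMean (p q.1 q.2) (φ q) := by
  simp only [erPr, ← prod_mul_distrib]
  rw [sum_adjS_prod (fun q b => φ q b * if b then p q.1 q.2 else 1 - p q.1 q.2)]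
  simp [bernoulliMean]

lemma sum_adjS_apply_mul_erPr {n : ℕ} (p : Fin n → Fin n → ℝ) (φ : Bool → ℝ)
    {e : Fin n × Fin n} (he : e ∈ pairs n) :
    ∑ A ∈ adjS n, φ (A e.1 e.2) * erPr p A = bernoulliMean (p e.1 e.2) φ := by
  have h := sum_adjS_prod_mul_erPr p (fun q b => if q = e then φ b else 1)
  rw [prod_eq_single_of_mem e he (fun q _ hq => by simp [hq, bernoulliMean])] at h
  simpa [prod_ite_eq', he, bernoulliMean] using h

lemma sum_adjS_apply_mul_apply_mul_erPr {n : ℕ} (p : Fin n → Fin n → ℝ) (φ ψ : Bool → ℝ)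
    {e f : Fin n × Fin n} (he : e ∈ pairs n) (hf : f ∈ pairs n) (hef : e ≠ f) :
    ∑ A ∈ adjS n, φ (A e.1 e.2) * ψ (A f.1 f.2) * erPr p A
      = bernoulliMean (p e.1 e.2) φ * bernoulliMean (p f.1 f.2) ψ := by
  have h := sum_adjS_prod_mul_erPr p
    (fun q b => if q = e then φ b else if q = f then ψ b else 1)
  rw [prod_eq_mul_of_mem e f he hf hef
    (fun q _ hq => by simp [hq.1, hq.2, bernoulliMean])] at h
  simp only [if_neg hef.symm, if_true] at h
  rw [← h]
  refine sum_congr rfl fun A _ => ?_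
  rw [prod_eq_mul_of_mem e f he hf hef (fun q _ hq => by simp [hq.1, hq.2])]
  simp [hef.symm]

lemma sum_adjS_sq_sum_mul_erPr {n : ℕ} (p : Fin n → Fin n → ℝ) (φ : Fin n × Fin n → Bool → ℝ) :
    ∑ A ∈ adjS n, (∑ q ∈ pairs n, φ q (A q.1 q.2)) ^ 2 * erPr p A
      = (∑ q ∈ pairs n, bernoulliMean (p q.1 q.2) (φ q)) ^ 2
        + ∑ q ∈ pairs n, (bernoulliMean (p q.1 q.2) (φ q ^ 2)
          - bernoulliMean (p q.1 q.2) (φ q) ^ 2) := by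
  set m := fun q : Fin n × Fin n => bernoulliMean (p q.1 q.2) (φ q)
  set v := fun q : Fin n × Fin n => bernoulliMean (p q.1 q.2) (φ q ^ 2) - m q ^ 2
  have hcov : ∀ e ∈ pairs n, ∀ f ∈ pairs n,
      ∑ A ∈ adjS n, φ e (A e.1 e.2) * φ f (A f.1 f.2) * erPr p A
        = m e * m f + if e = f then v e else 0 := by
    intro e he f hf
    by_cases hef : e = f
    · subst hef
      simp only [← sq, v]
      rw [← sum_adjS_apply_mul_erPr p (φ e ^ 2) he]
      simp
    · rw [if_neg hef, add_zero, sum_adjS_apply_mul_apply_mul_erPr p _ _ he hf hef]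
  calc ∑ A ∈ adjS n, (∑ q ∈ pairs n, φ q (A q.1 q.2)) ^ 2 * erPr p A
      = ∑ e ∈ pairs n, ∑ f ∈ pairs n,
          ∑ A ∈ adjS n, φ e (A e.1 e.2) * φ f (A f.1 f.2) * erPr p A := by
        simp_rw [sq, sum_mul_sum, sum_mul]
        rw [sum_comm]
        exact sum_congr rfl fun _ _ => sum_comm
    _ = ∑ e ∈ pairs n, ∑ f ∈ pairs n, (m e * m f + if e = f then v e else 0) :=
        sum_congr rfl fun e he => sum_congr rfl fun f hf => hcov e he f hf
    _ = (∑ q ∈ pairs n, m q) ^ 2 + ∑ q ∈ pairs n, v q := by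
        simp only [sum_add_distrib, sum_ite_eq, sq, sum_mul_sum]
        congr 1
        exact sum_congr rfl fun e he => if_pos he

def mismatch (b a : Bool) : ℝ :=
  if a = b then 0 else 1

lemma dH_eq_sum_mismatch {n : ℕ} (A B : Matrix (Fin n) (Fin n) Bool) :
    dH A B = ∑ q ∈ pairs n, mismatch (B q.1 q.2) (A q.1 q.2) := by
  refine sum_congr rfl fun q _ => ?_
  simp only [_root_.val, mismatch]
  cases A q.1 q.2 <;> cases B q.1 q.2 <;> norm_num

lemma mismatch_sq (b : Bool) : mismatch b ^ 2 = mismatch b := by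
  funext a
  by_cases h : a = b <;> simp [mismatch, h]

lemma bernoulliMean_mismatch (t : ℝ) (b : Bool) :
    bernoulliMean t (mismatch b) = if b then 1 - t else t := by
  cases b <;> simp [bernoulliMean, mismatch]

lemma bernoulliMean_mismatch_nonneg {t : ℝ} (h0 : 0 ≤ t) (h1 : t ≤ 1) (b : Bool) :
    0 ≤ bernoulliMean t (mismatch b) := by
  rw [bernoulliMean_mismatch]
  split <;> linarith

lemma bernoulliMean_mismatch_le {t : ℝ} {b : Bool} (hb : b = true ↔ 1 / 2 < t) (c : Bool) :
    bernoulliMean t (mismatch b) ≤ bernoulliMean t (mismatch c) := by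
  rw [bernoulliMean_mismatch, bernoulliMean_mismatch]
  cases b <;> cases c <;> simp only [Bool.false_eq_true, false_iff, true_iff, not_lt] at hb <;>
    simp <;> linarith

lemma sum_adjS_dH_sq_mul_erPr {n : ℕ} (p : Fin n → Fin n → ℝ) (B : Matrix (Fin n) (Fin n) Bool) :
    ∑ A ∈ adjS n, dH A B ^ 2 * erPr p A
      = (∑ q ∈ pairs n, bernoulliMean (p q.1 q.2) (mismatch (B q.1 q.2))) ^ 2
        + ∑ q ∈ pairs n, p q.1 q.2 * (1 - p q.1 q.2) := by
  simp only [dH_eq_sum_mismatch]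
  rw [sum_adjS_sq_sum_mul_erPr p (fun q => mismatch (B q.1 q.2))]
  congr 1
  refine sum_congr rfl fun q _ => ?_
  rw [mismatch_sq, bernoulliMean_mismatch]
  split <;> ring

theorem stmt7_general (n : ℕ) (p : Fin n → Fin n → ℝ)
    (hp : ∀ i j, 0 ≤ p i j ∧ p i j ≤ 1)
    (M : Matrix (Fin n) (Fin n) Bool)
    (hM : ∀ i j, M i j = true ↔ 1 / 2 < p i j) :
    ∀ B ∈ adjS n,
      ∑ A ∈ adjS n, (dH A M) ^ 2 * erPr p A ≤ ∑ A ∈ adjS n, (dH A B) ^ 2 * erPr p A := by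
  intro B _
  rw [sum_adjS_dH_sq_mul_erPr, sum_adjS_dH_sq_mul_erPr]
  gcongr
  · exact sum_nonneg fun q _ => bernoulliMean_mismatch_nonneg (hp _ _).1 (hp _ _).2 _
  · exact bernoulliMean_mismatch_le (hM _ _) _

theorem stmt7 (n : ℕ) (p : Fin n → Fin n → ℝ)
    (hp : ∀ i j, 0 ≤ p i j ∧ p i j ≤ 1) (hsym : ∀ i j, p i j = p j i)
    (hdiag : ∀ i, p i i = 0)
    (M : Matrix (Fin n) (Fin n) Bool)
    (hM : ∀ i j, M i j = true ↔ 1 / 2 < p i j) :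
    ∀ B ∈ adjS n,
      ∑ A ∈ adjS n, (dH A M) ^ 2 * erPr p A ≤ ∑ A ∈ adjS n, (dH A B) ^ 2 * erPr p A :=
  stmt7_general n p hp M hM
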